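/- (Closed-form apex-return criterion for the Jirásek–Grassl model.) Let γ* = √6·f̄_c·ϱ^tr/(2G·m₀) and p^a = f̄_c/m₀. Then q_tr(γ*) ≥ 0 if and only if p^tr − (√6·K/(2G))·(m_g'(p^a)/m₀)·ϱ^tr − p^a ≥ 0. Equivalently, since ϱ̂_tr(γ*) = 0, the condition (m₀/f̄_c)·p̂_tr(γ*) − 1 ≥ 0 holds if and only if p^tr − (√6·K·ϱ^tr/(2G·m₀))·m_g'(f̄_c/m₀) − f̄_c/m₀ ≥ 0. -/
import Mathlib


noncomputable section

/-- m_g'(p) = A_g·exp((p − f̄_t/3)/(B_g·f̄_c)). -/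
def mgp (Ag Bg fc ft p : ℝ) : ℝ := Ag * Real.exp ((p - ft/3) / (Bg * fc))

/-- closed-form apex-return criterion for the Jirásek–Grassl model:
q_tr(γ*) ≥ 0 iff p^tr − (√6 K/(2G))·(m_g'(p^a)/m₀)·ϱ^tr − p^a ≥ 0, where
γ* = √6 f̄_c ϱ^tr/(2Gm₀) and p^a = f̄_c/m₀; equivalently, since ϱ̂_tr(γ*) = 0,
(m₀/f̄_c)·p̂_tr(γ*) − 1 ≥ 0 iff the same closed-form condition holds. -/
theorem JG_apex_criterion
    (G K m0 fc Ag Bg ft r ptr ϱtr : ℝ)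
    (hG : 0 < G) (hK : 0 < K) (hm0 : 0 < m0) (hfc : 0 < fc)
    (hAg : 0 < Ag) (hBg : 0 < Bg) (hft : 0 ≤ ft) (hr : 0 ≤ r) (hϱtr : 0 < ϱtr)
    (ph : ℝ → ℝ)
    (hph : ∀ γ ≥ (0:ℝ), ph γ + γ * (K / fc) * mgp Ag Bg fc ft (ph γ) = ptr)
    (ϱh : ℝ → ℝ)
    (hϱh : ∀ γ, ϱh γ = (1 / (1 + γ * 6 * G / fc^2)) *
      max 0 (ϱtr - γ * 2 * G * m0 / (Real.sqrt 6 * fc)))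
    (q : ℝ → ℝ)
    (hq : ∀ γ, q γ = (3/2) * (ϱh γ / fc)^2 +
      m0 * (ϱh γ * r / (Real.sqrt 6 * fc) + ph γ / fc) - 1) :
    ϱh (Real.sqrt 6 * fc * ϱtr / (2 * G * m0)) = 0 ∧
    (0 ≤ q (Real.sqrt 6 * fc * ϱtr / (2 * G * m0)) ↔
      0 ≤ ptr - (Real.sqrt 6 * K / (2 * G)) * (mgp Ag Bg fc ft (fc / m0) / m0) * ϱtr
        - fc / m0) ∧
    (0 ≤ (m0 / fc) * ph (Real.sqrt 6 * fc * ϱtr / (2 * G * m0)) - 1 ↔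
      0 ≤ ptr - (Real.sqrt 6 * K * ϱtr / (2 * G * m0)) * mgp Ag Bg fc ft (fc / m0)
        - fc / m0) := by
  have h6 : (0:ℝ) < Real.sqrt 6 := Real.sqrt_pos.mpr (by norm_num)
  set γ := Real.sqrt 6 * fc * ϱtr / (2 * G * m0) with hγdef
  have hγ0 : 0 ≤ γ := by positivity
  -- ϱh γ = 0
  have key : γ * 2 * G * m0 / (Real.sqrt 6 * fc) = ϱtr := by
    rw [hγdef]; field_simp
  have hϱ0 : ϱh γ = 0 := by
    rw [hϱh, key, sub_self, max_self, mul_zero]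
  -- strict monotonicity of F p = p + γ*(K/fc)*mgp p
  have hmono : StrictMono (fun p => p + γ * (K / fc) * mgp Ag Bg fc ft p) := by
    have h1 : Monotone (fun p => γ * (K / fc) * mgp Ag Bg fc ft p) := by
      intro a b hab
      have hexp : mgp Ag Bg fc ft a ≤ mgp Ag Bg fc ft b := by
        unfold mgp
        have : (a - ft/3) / (Bg * fc) ≤ (b - ft/3) / (Bg * fc) := by
          apply div_le_div_of_nonneg_right _ (by positivity)
          linarith
        exact mul_le_mul_of_nonneg_left (Real.exp_le_exp.mpr this) hAg.le
      have hc : 0 ≤ γ * (K / fc) := by positivity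
      exact mul_le_mul_of_nonneg_left hexp hc
    simpa using strictMono_id.add_monotone h1
  have hFph := hph γ hγ0
  -- core equivalence: fc/m0 ≤ ph γ ↔ fc/m0 + c*mgp(fc/m0) ≤ ptr
  have hcore : fc / m0 ≤ ph γ ↔
      fc / m0 + γ * (K / fc) * mgp Ag Bg fc ft (fc / m0) ≤ ptr := by
    rw [← hFph]
    exact hmono.le_iff_le.symm
  have hcoef : γ * (K / fc) = Real.sqrt 6 * K * ϱtr / (2 * G * m0) := by
    rw [hγdef]; field_simp
  have haux : ∀ x : ℝ, (0 ≤ m0 / fc * x - 1 ↔ fc / m0 ≤ x) := by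
    intro x
    rw [sub_nonneg, div_mul_eq_mul_div, le_div_iff₀ hfc, one_mul,
      div_le_iff₀ hm0, mul_comm]
  have hiff3 : (0 ≤ (m0 / fc) * ph γ - 1 ↔
      0 ≤ ptr - (Real.sqrt 6 * K * ϱtr / (2 * G * m0)) * mgp Ag Bg fc ft (fc / m0)
        - fc / m0) := by
    rw [← hcoef, haux (ph γ)]
    constructor
    · intro h; linarith [hcore.mp h]
    · intro h; exact hcore.mpr (by linarith)
  refine ⟨hϱ0, ?_, hiff3⟩
  have hqγ : q γ = m0 * (ph γ / fc) - 1 := by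
    rw [hq, hϱ0]; ring
  have hrhs : (Real.sqrt 6 * K / (2 * G)) * (mgp Ag Bg fc ft (fc / m0) / m0) * ϱtr
      = (Real.sqrt 6 * K * ϱtr / (2 * G * m0)) * mgp Ag Bg fc ft (fc / m0) := by
    field_simp
  rw [hqγ, hrhs]
  have : m0 * (ph γ / fc) = (m0 / fc) * ph γ := by ring
  rw [this]
  exact hiff3
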